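/- arXiv:1212.6424 — 9 statements merged into one kernel-verified Lean document; each statement's English description precedes it below -/
import Mathlib

section
/- The functions u(t) = z·k₃·(cosh(z(α₁-α₋₁)(t-k₁)))^(2(α₀-α₁)/(α₁-α₋₁)), v(t) = (z/k₃)·(cosh(z(α₁-α₋₁)(t-k₁)))^(2(α₀-α₋₁)/(α₋₁-α₁)), w(t) = z·tanh(z(α₁-α₋₁)(t-k₁)) satisfy the system w' = (α₁-α₋₁)·u·v, u' = 2(α₀-α₁)·u·w, v' = 2(α₋₁-α₀)·v·w. -/
/-- The explicit functions solve the sl(2) top-like system. -/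
theorem stmt_1 (αm1 α0 α1 z k1 k3 : ℝ) (hα : α1 ≠ αm1) (hk3 : k3 ≠ 0)
    (u v w : ℝ → ℝ)
    (hu : u = fun t => z * k3 *
      (Real.cosh (z * (α1 - αm1) * (t - k1))) ^ (2 * (α0 - α1) / (α1 - αm1)))
    (hv : v = fun t => (z / k3) *
      (Real.cosh (z * (α1 - αm1) * (t - k1))) ^ (2 * (α0 - αm1) / (αm1 - α1)))
    (hw : w = fun t => z * Real.tanh (z * (α1 - αm1) * (t - k1))) :
    (∀ t, HasDerivAt w ((α1 - αm1) * (u t * v t)) t) ∧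
    (∀ t, HasDerivAt u (2 * (α0 - α1) * (u t * w t)) t) ∧
    (∀ t, HasDerivAt v (2 * (αm1 - α0) * (v t * w t)) t) := by
  subst hu hv hw
  have hne : α1 - αm1 ≠ 0 := sub_ne_zero.mpr hα
  set c := z * (α1 - αm1) with hc
  have key : ∀ t : ℝ,
      HasDerivAt (fun t => z * (α1 - αm1) * (t - k1)) c t ∧
      Real.cosh (c * (t - k1)) > 0 := by
    intro t
    constructor
    · simpa using ((hasDerivAt_id t).sub_const k1).const_mul (z * (α1 - αm1))
    · exact Real.cosh_pos _
  refine ⟨?_, ?_, ?_⟩ <;> intro t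
  · -- w' = (α1 - αm1) * u * v
    obtain ⟨hin, hpos⟩ := key t
    set g := c * (t - k1) with hg
    have hch : HasDerivAt (fun t => Real.cosh (z * (α1 - αm1) * (t - k1)))
        (Real.sinh g * c) t := by have := (Real.hasDerivAt_cosh g).comp t hin; exact this
    have hsh : HasDerivAt (fun t => Real.sinh (z * (α1 - αm1) * (t - k1)))
        (Real.cosh g * c) t := by have := (Real.hasDerivAt_sinh g).comp t hin; exact this
    have hdiv := (hsh.div hch hpos.ne')
    have htanh : HasDerivAt (fun t => Real.tanh (z * (α1 - αm1) * (t - k1)))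
        (c / Real.cosh g ^ 2) t := by
      have := hdiv
      simp only [Pi.div_def, ← Real.tanh_eq_sinh_div_cosh] at this
      convert this using 1
      · rfl
      · rfl
      have hg' : z * (α1 - αm1) * (t - k1) = g := rfl
      simp only [hg']
      congr 1
      linear_combination (-c) * (Real.cosh_sq_sub_sinh_sq g)
    have := htanh.const_mul z
    convert this using 1
    · rfl
    · rfl
    -- RHS: z * (c / cosh g ^ 2); LHS : (α1-αm1) * (u t * v t)
    have hsum : (Real.cosh g) ^ (2 * (α0 - α1) / (α1 - αm1)) *
        (Real.cosh g) ^ (2 * (α0 - αm1) / (αm1 - α1)) = (Real.cosh g) ^ (-2 : ℝ) := by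
      rw [← Real.rpow_add hpos]
      congr 1
      have hne' : αm1 - α1 ≠ 0 := sub_ne_zero.mpr (Ne.symm hα)
      field_simp
      ring
    have hg' : z * (α1 - αm1) * (t - k1) = g := rfl
    simp only [hg', ← hg]
    rw [show z * k3 * Real.cosh g ^ (2 * (α0 - α1) / (α1 - αm1)) *
        (z / k3 * Real.cosh g ^ (2 * (α0 - αm1) / (αm1 - α1))) =
        z * z * (Real.cosh g ^ (2 * (α0 - α1) / (α1 - αm1)) *
          Real.cosh g ^ (2 * (α0 - αm1) / (αm1 - α1))) by field_simp, hsum]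
    rw [Real.rpow_neg hpos.le, show ((2:ℝ)) = ((2:ℕ):ℝ) by norm_num,
      Real.rpow_natCast]
    field_simp [hc]
    ring
  · -- u' = 2(α0-α1) u w
    obtain ⟨hin, hpos⟩ := key t
    set g := c * (t - k1) with hg
    set p := 2 * (α0 - α1) / (α1 - αm1) with hp
    have hch : HasDerivAt (fun t => Real.cosh (z * (α1 - αm1) * (t - k1)))
        (Real.sinh g * c) t := by have := (Real.hasDerivAt_cosh g).comp t hin; exact this
    have hrpow := (hch.rpow_const (p := p) (Or.inl hpos.ne')).const_mul (z * k3)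
    convert hrpow using 1
    · rfl
    · rfl
    have hg' : z * (α1 - αm1) * (t - k1) = g := rfl
    simp only [hg', ← hg]
    rw [Real.rpow_sub_one hpos.ne', Real.tanh_eq_sinh_div_cosh]
    have hpc : p * c = 2 * (α0 - α1) * z := by
      rw [hp, hc]; field_simp
    clear_value g p c
    field_simp
    linear_combination (-(z * Real.sinh g)) * hpc
  · -- v' = 2(αm1-α0) v w
    obtain ⟨hin, hpos⟩ := key t
    set g := c * (t - k1) with hg
    set p := 2 * (α0 - αm1) / (αm1 - α1) with hp
    have hch : HasDerivAt (fun t => Real.cosh (z * (α1 - αm1) * (t - k1)))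
        (Real.sinh g * c) t := by have := (Real.hasDerivAt_cosh g).comp t hin; exact this
    have hrpow := (hch.rpow_const (p := p) (Or.inl hpos.ne')).const_mul (z / k3)
    convert hrpow using 1
    · rfl
    · rfl
    have hg' : z * (α1 - αm1) * (t - k1) = g := rfl
    simp only [hg', ← hg]
    rw [Real.rpow_sub_one hpos.ne', Real.tanh_eq_sinh_div_cosh]
    have hne' : αm1 - α1 ≠ 0 := sub_ne_zero.mpr (Ne.symm hα)
    have hpc : p * c = 2 * (αm1 - α0) * z := by
      rw [hp, hc]; field_simp; ring
    clear_value g p c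
    field_simp
    linear_combination (-(z * Real.sinh g)) * hpc
end

section
/- If w, u, v : ℝ → ℝ satisfy w' = (α₁ - α₋₁)·u·v, u' = 2(α₀ - α₁)·u·w, v' = 2(α₋₁ - α₀)·v·w, and u(t), v(t) > 0 for all t, then H₂ = u^(α₀-α₋₁) · v^(α₀-α₁) is constant along solutions. -/
/-- First integral H₂ = u^(α₀-α₋₁)·v^(α₀-α₁) of the sl(2) top-like system. -/
theorem stmt_2 (αm1 α0 α1 : ℝ) (w u v : ℝ → ℝ)
    (hw : ∀ t, HasDerivAt w ((α1 - αm1) * (u t * v t)) t)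
    (hu : ∀ t, HasDerivAt u (2 * (α0 - α1) * (u t * w t)) t)
    (hv : ∀ t, HasDerivAt v (2 * (αm1 - α0) * (v t * w t)) t)
    (hupos : ∀ t, 0 < u t) (hvpos : ∀ t, 0 < v t) :
    ∀ t, HasDerivAt (fun t => (u t) ^ (α0 - αm1) * (v t) ^ (α0 - α1)) 0 t := by
  intro t
  have h1 := (hu t).rpow_const (p := α0 - αm1) (Or.inl (hupos t).ne')
  have h2 := (hv t).rpow_const (p := α0 - α1) (Or.inl (hvpos t).ne')
  have h := h1.mul h2
  refine h.congr_deriv (Eq.symm ?_)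
  rw [Real.rpow_sub_one (hupos t).ne', Real.rpow_sub_one (hvpos t).ne']
  have hu1 : u t * (u t)⁻¹ = 1 := mul_inv_cancel₀ (hupos t).ne'
  have hv1 : v t * (v t)⁻¹ = 1 := mul_inv_cancel₀ (hvpos t).ne'
  rw [div_eq_mul_inv, div_eq_mul_inv]
  linear_combination (-2*(α0-α1)*(α0-αm1)*w t*(u t ^ (α0-αm1))*(v t ^ (α0-α1))) * hu1 + (2*(α0-α1)*(α0-αm1)*(u t ^ (α0-αm1))*(v t ^ (α0-α1))*w t) * hv1
end

section
/- If a matrix-valued differentiable function q : ℝ → Mₙ(ℝ) satisfies q' = [R(q), q] for some function R(q) (i.e., q' = R(q)·q - q·R(q)), then for every natural number m, the trace of q(t)^m is constant in t. -/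
/-- Entrywise product rule for matrix-valued functions. -/
lemma entry_mul_deriv {n : ℕ} (A B : ℝ → Matrix (Fin n) (Fin n) ℝ)
    (A' B' : Matrix (Fin n) (Fin n) ℝ) (t : ℝ)
    (hA : ∀ i j, HasDerivAt (fun t => A t i j) (A' i j) t)
    (hB : ∀ i j, HasDerivAt (fun t => B t i j) (B' i j) t) :
    ∀ i j, HasDerivAt (fun t => (A t * B t) i j) ((A' * B t + A t * B') i j) t := by
  intro i j
  have h : HasDerivAt (fun t => ∑ k, A t i k * B t k j)
      (∑ k, (A' i k * B t k j + A t i k * B' k j)) t :=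
    HasDerivAt.fun_sum fun k _ => (hA i k).mul (hB k j)
  have e1 : (fun t => (A t * B t) i j) = fun t => ∑ k, A t i k * B t k j := by
    funext s; simp [Matrix.mul_apply]
  have e2 : (A' * B t + A t * B') i j
      = ∑ k, (A' i k * B t k j + A t i k * B' k j) := by
    simp [Matrix.add_apply, Matrix.mul_apply, Finset.sum_add_distrib]
  rw [e1, e2]
  exact h

lemma entry_pow_deriv {n : ℕ} (q P : ℝ → Matrix (Fin n) (Fin n) ℝ)
    (hq : ∀ t, ∀ i j, HasDerivAt (fun t => q t i j)
      ((P t * q t - q t * P t) i j) t) (m : ℕ) (t : ℝ) :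
    ∀ i j, HasDerivAt (fun t => (q t ^ m) i j)
      ((P t * q t ^ m - q t ^ m * P t) i j) t := by
  induction m with
  | zero =>
      intro i j
      have : (fun t => (q t ^ 0) i j) = fun _ => (1 : Matrix (Fin n) (Fin n) ℝ) i j := by
        funext s; simp
      rw [this]
      simpa using hasDerivAt_const t ((1 : Matrix (Fin n) (Fin n) ℝ) i j)
  | succ m ih =>
      intro i j
      have h := entry_mul_deriv (fun t => q t ^ m) q
        (P t * q t ^ m - q t ^ m * P t) (P t * q t - q t * P t) t ih (hq t) i j
      have e1 : (fun t => (q t ^ (m + 1)) i j) = fun t => (q t ^ m * q t) i j := by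
        funext s; rw [pow_succ]
      have e2 : (P t * q t ^ m - q t ^ m * P t) * q t + q t ^ m * (P t * q t - q t * P t)
          = P t * q t ^ (m + 1) - q t ^ (m + 1) * P t := by
        rw [pow_succ]; noncomm_ring
      rw [e1, ← e2]
      exact h

/-- For a Lax-type equation q' = P·q - q·P, the trace of every power qᵐ is
a first integral. -/
theorem stmt_5 (n : ℕ) (q P : ℝ → Matrix (Fin n) (Fin n) ℝ)
    (hq : ∀ t, ∀ i j, HasDerivAt (fun t => q t i j)
      ((P t * q t - q t * P t) i j) t) :
    ∀ (m : ℕ) (t : ℝ), HasDerivAt (fun t => (q t ^ m).trace) 0 t := by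
  intro m t
  have h : HasDerivAt (fun t => ∑ i, (q t ^ m) i i)
      (∑ i, (P t * q t ^ m - q t ^ m * P t) i i) t :=
    HasDerivAt.fun_sum fun i _ => entry_pow_deriv q P hq m t i i
  have e1 : (fun t => (q t ^ m).trace) = fun t => ∑ i, (q t ^ m) i i := by
    funext s; simp [Matrix.trace, Matrix.diag]
  have e2 : (∑ i, (P t * q t ^ m - q t ^ m * P t) i i) = 0 := by
    have : (P t * q t ^ m - q t ^ m * P t).trace = 0 := by
      rw [Matrix.trace_sub, Matrix.trace_mul_comm, sub_self]
    simpa [Matrix.trace, Matrix.diag] using this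
  rw [e1, ← e2]
  exact h
end

section
/- Let 𝒢 be a Lie algebra decomposed as a direct sum of vector spaces 𝒢 = 𝒢₊ ⊕ V₁ with 𝒢₊ a subalgebra. Form 𝒢̄ = 𝒢 ⊕ 𝒢 ⊕ 𝒢 with the diagonal subalgebra 𝒢̄₊ = {(a,a,a) : a ∈ 𝒢}. Given a vector space decomposition 𝒢 = 𝒢₀ ⊕ M ⊕ N with 𝒢₀ a subalgebra and 𝒢₀+M, 𝒢₀+N subalgebras, define 𝒢̄₋ = {(a,b,c) : a ∈ 𝒢₀+N, b ∈ 𝒢₀+M, c ∈ 𝒢} and M̄ = {(a,b,c) : a ∈ 𝒢₀+N, b ∈ 𝒢₀+M, c ∈ M+N}. Then 𝒢̄ = 𝒢̄₊ ⊕ M̄ as vector spaces. -/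
/-- With 𝒢 = 𝒢₀ ⊕ M ⊕ N, the triple sum 𝒢̄ = 𝒢 × 𝒢 × 𝒢 decomposes as the
direct sum of the diagonal 𝒢̄₊ and M̄ = (𝒢₀+N) × (𝒢₀+M) × (M+N). -/
theorem stmt_6 {L : Type*} [LieRing L] [LieAlgebra ℝ L]
    (G0 M N : Submodule ℝ L)
    -- 𝒢₀, 𝒢₀ + M, 𝒢₀ + N are subalgebras:
    (hG0 : ∀ x ∈ G0, ∀ y ∈ G0, ⁅x, y⁆ ∈ G0)
    (hG0M : ∀ x ∈ G0 ⊔ M, ∀ y ∈ G0 ⊔ M, ⁅x, y⁆ ∈ G0 ⊔ M)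
    (hG0N : ∀ x ∈ G0 ⊔ N, ∀ y ∈ G0 ⊔ N, ⁅x, y⁆ ∈ G0 ⊔ N)
    -- 𝒢 = 𝒢₀ ⊕ M ⊕ N as vector spaces:
    (htotal : G0 ⊔ M ⊔ N = ⊤)
    (hindep : ∀ a ∈ G0, ∀ b ∈ M, ∀ c ∈ N, a + b + c = 0 → a = 0 ∧ b = 0 ∧ c = 0)
    (diag Mbar : Submodule ℝ (L × L × L))
    (hdiag : diag = LinearMap.range
      ((LinearMap.id : L →ₗ[ℝ] L).prod
        ((LinearMap.id : L →ₗ[ℝ] L).prod (LinearMap.id : L →ₗ[ℝ] L))))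
    (hMbar : Mbar = (G0 ⊔ N).prod ((G0 ⊔ M).prod (M ⊔ N))) :
    IsCompl diag Mbar := by
  subst hdiag hMbar
  have hdec : ∀ v : L, ∃ g ∈ G0, ∃ m ∈ M, ∃ n ∈ N, v = g + m + n := by
    intro v
    have hv : v ∈ G0 ⊔ M ⊔ N := htotal ▸ Submodule.mem_top
    rcases Submodule.mem_sup.mp hv with ⟨u, hu, n, hn, rfl⟩
    rcases Submodule.mem_sup.mp hu with ⟨g, hg, m, hm, rfl⟩
    exact ⟨g, hg, m, hm, n, hn, rfl⟩
  constructor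
  · rw [Submodule.disjoint_def]
    rintro x ⟨a, rfl⟩ hx'
    simp only [LinearMap.prod_apply, Function.prod, LinearMap.id_apply,
      Submodule.mem_prod] at hx' ⊢
    obtain ⟨h1, h2, h3⟩ := hx'
    rcases Submodule.mem_sup.mp h1 with ⟨g1, hg1, n1, hn1, e1⟩
    rcases Submodule.mem_sup.mp h2 with ⟨g2, hg2, m2, hm2, e2⟩
    rcases Submodule.mem_sup.mp h3 with ⟨m3, hm3, n3, hn3, e3⟩
    have key : g1 - g2 + -m2 + n1 = 0 := by
      have h := e1.trans e2.symm
      rw [show g1 - g2 + -m2 + n1 = (g1 + n1) - (g2 + m2) by abel, h, sub_self]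
    obtain ⟨hgg, hm2z, hn1z⟩ :=
      hindep _ (sub_mem hg1 hg2) _ (neg_mem hm2) _ hn1 key
    have haG0 : a ∈ G0 := by
      rw [← e1, hn1z, add_zero]
      exact hg1
    have key2 : a + -m3 + -n3 = 0 := by
      rw [show a + -m3 + -n3 = a - (m3 + n3) by abel, e3, sub_self]
    obtain ⟨ha0, -, -⟩ :=
      hindep _ haG0 _ (neg_mem hm3) _ (neg_mem hn3) key2
    simp [ha0, Prod.ext_iff]
  · rw [codisjoint_iff]
    rw [eq_top_iff]
    rintro ⟨x, y, z⟩ -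
    obtain ⟨gx, hgx, mx, hmx, nx, hnx, rfl⟩ := hdec x
    obtain ⟨gy, hgy, my, hmy, ny, hny, rfl⟩ := hdec y
    obtain ⟨gz, hgz, mz, hmz, nz, hnz, rfl⟩ := hdec z
    set a := gz + mx + ny with ha
    refine Submodule.mem_sup.mpr ⟨(a, a, a), ⟨a, rfl⟩,
      (gx + mx + nx - a, gy + my + ny - a, gz + mz + nz - a),
      ⟨?_, ?_, ?_⟩, by simp [Prod.ext_iff]⟩
    · exact Submodule.mem_sup.mpr ⟨gx - gz, sub_mem hgx hgz, nx - ny,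
        sub_mem hnx hny, by rw [ha]; abel⟩
    · exact Submodule.mem_sup.mpr ⟨gy - gz, sub_mem hgy hgz, my - mx,
        sub_mem hmy hmx, by rw [ha]; abel⟩
    · exact Submodule.mem_sup.mpr ⟨mz - mx, sub_mem hmz hmx, nz - ny,
        sub_mem hnz hny, by rw [ha]; abel⟩
end

section
/- If w₁,u₁,v₁,w₂,u₂,v₂ : ℝ → ℝ satisfy w₁' = (α₁-α₋₁)(u₂v₁ - u₁v₂), u₁' = (α₀-α₁)(u₂w₁ - u₁w₂), v₁' = (α₀-α₋₁)(v₂w₁ + v₁w₂), w₂' = (α₁-α₋₁)(u₁v₁ + u₂v₂), u₂' = (α₁-α₀)(u₁w₁ + u₂w₂), v₂' = (α₋₁-α₀)(v₁w₁ - v₂w₂), then I₁ = w₁w₂ + u₁v₂ - v₁u₂ is constant along solutions. -/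
/-- First integral I₁ = w₁w₂ + u₁v₂ - v₁u₂ of the so(3,1) top-like system. -/
theorem stmt_10 (αm1 α0 α1 : ℝ) (w1 u1 v1 w2 u2 v2 : ℝ → ℝ)
    (hw1 : ∀ t, HasDerivAt w1 ((α1 - αm1) * (u2 t * v1 t - u1 t * v2 t)) t)
    (hu1 : ∀ t, HasDerivAt u1 ((α0 - α1) * (u2 t * w1 t - u1 t * w2 t)) t)
    (hv1 : ∀ t, HasDerivAt v1 ((α0 - αm1) * (v2 t * w1 t + v1 t * w2 t)) t)
    (hw2 : ∀ t, HasDerivAt w2 ((α1 - αm1) * (u1 t * v1 t + u2 t * v2 t)) t)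
    (hu2 : ∀ t, HasDerivAt u2 ((α1 - α0) * (u1 t * w1 t + u2 t * w2 t)) t)
    (hv2 : ∀ t, HasDerivAt v2 ((αm1 - α0) * (v1 t * w1 t - v2 t * w2 t)) t) :
    ∀ t, HasDerivAt (fun t => w1 t * w2 t + u1 t * v2 t - v1 t * u2 t) 0 t := by
  intro t
  have h := (((hw1 t).mul (hw2 t)).add ((hu1 t).mul (hv2 t))).sub
    ((hv1 t).mul (hu2 t))
  refine h.congr_deriv ?_
  ring
end

section
/- Under the same so(3,1) top-like system (w₁' = (α₁-α₋₁)(u₂v₁-u₁v₂), u₁' = (α₀-α₁)(u₂w₁-u₁w₂), v₁' = (α₀-α₋₁)(v₂w₁+v₁w₂), w₂' = (α₁-α₋₁)(u₁v₁+u₂v₂), u₂' = (α₁-α₀)(u₁w₁+u₂w₂), v₂' = (α₋₁-α₀)(v₁w₁-v₂w₂)), the quantity I₂ = w₁² + 2u₁v₁ - w₂² + 2u₂v₂ is constant along solutions. -/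
/-- First integral I₂ = w₁² + 2u₁v₁ - w₂² + 2u₂v₂ of the so(3,1) top-like system. -/
theorem stmt_11 (αm1 α0 α1 : ℝ) (w1 u1 v1 w2 u2 v2 : ℝ → ℝ)
    (hw1 : ∀ t, HasDerivAt w1 ((α1 - αm1) * (u2 t * v1 t - u1 t * v2 t)) t)
    (hu1 : ∀ t, HasDerivAt u1 ((α0 - α1) * (u2 t * w1 t - u1 t * w2 t)) t)
    (hv1 : ∀ t, HasDerivAt v1 ((α0 - αm1) * (v2 t * w1 t + v1 t * w2 t)) t)
    (hw2 : ∀ t, HasDerivAt w2 ((α1 - αm1) * (u1 t * v1 t + u2 t * v2 t)) t)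
    (hu2 : ∀ t, HasDerivAt u2 ((α1 - α0) * (u1 t * w1 t + u2 t * w2 t)) t)
    (hv2 : ∀ t, HasDerivAt v2 ((αm1 - α0) * (v1 t * w1 t - v2 t * w2 t)) t) :
    ∀ t, HasDerivAt (fun t => (w1 t) ^ 2 + 2 * (u1 t * v1 t) - (w2 t) ^ 2 + 2 * (u2 t * v2 t)) 0 t := by
  intro t
  have h := ((((hw1 t).pow 2).add (((hu1 t).mul (hv1 t)).const_mul 2)).sub
      ((hw2 t).pow 2)).add (((hu2 t).mul (hv2 t)).const_mul 2)
  refine h.congr_deriv ?_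
  ring
end

section
/- The two vector fields on ℝ⁶ (coordinates w₁,u₁,v₁,w₂,u₂,v₂) X₁ = (0, -u₁, v₁, 0, -u₂, v₂) and X₂ = (0, u₂, v₂, 0, -u₁, -v₁) commute with each other, and both commute with the vector field F of the so(3,1) top-like system F = ((α₁-α₋₁)(u₂v₁-u₁v₂), (α₀-α₁)(u₂w₁-u₁w₂), (α₀-α₋₁)(v₂w₁+v₁w₂), (α₁-α₋₁)(u₁v₁+u₂v₂), (α₁-α₀)(u₁w₁+u₂w₂), (α₋₁-α₀)(v₁w₁-v₂w₂)). -/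
noncomputable def pr6 (i : Fin 6) : (Fin 6 → ℝ) →L[ℝ] ℝ := ContinuousLinearMap.proj i

lemma hpr6 (i : Fin 6) (p : Fin 6 → ℝ) : HasFDerivAt (fun q : Fin 6 → ℝ => q i) (pr6 i) p :=
  (pr6 i).hasFDerivAt

lemma hquad6 (a b : Fin 6) (p : Fin 6 → ℝ) :
    HasFDerivAt (fun q : Fin 6 → ℝ => q a * q b) (p a • pr6 b + p b • pr6 a) p :=
  (hpr6 a p).mul (hpr6 b p)

lemma fd_coord6 (i : Fin 6) (p v : Fin 6 → ℝ) :
    fderiv ℝ (fun q : Fin 6 → ℝ => q i) p v = v i := by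
  rw [(hpr6 i p).fderiv]; rfl

lemma fd_neg6 (i : Fin 6) (p v : Fin 6 → ℝ) :
    fderiv ℝ (fun q : Fin 6 → ℝ => -q i) p v = -v i := by
  rw [(show HasFDerivAt (fun q : Fin 6 → ℝ => -q i) _ p from (hpr6 i p).neg).fderiv]; simp [pr6]

lemma fdA6 (k : ℝ) (a b c d : Fin 6) (p v : Fin 6 → ℝ) :
    fderiv ℝ (fun q : Fin 6 → ℝ => k * (q a * q b + q c * q d)) p v
      = k * ((p a * v b + v a * p b) + (p c * v d + v c * p d)) := by
  rw [(show HasFDerivAt (fun q : Fin 6 → ℝ => k * (q a * q b + q c * q d)) _ p from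
    ((hquad6 a b p).add (hquad6 c d p)).const_mul k).fderiv]
  simp only [pr6, ContinuousLinearMap.coe_smul', ContinuousLinearMap.add_apply,
    ContinuousLinearMap.sub_apply, ContinuousLinearMap.smul_apply, Pi.smul_apply,
    smul_eq_mul, ContinuousLinearMap.proj_apply]
  ring

lemma fdB6 (k : ℝ) (a b c d : Fin 6) (p v : Fin 6 → ℝ) :
    fderiv ℝ (fun q : Fin 6 → ℝ => k * (q a * q b - q c * q d)) p v
      = k * ((p a * v b + v a * p b) - (p c * v d + v c * p d)) := by
  rw [(show HasFDerivAt (fun q : Fin 6 → ℝ => k * (q a * q b - q c * q d)) _ p from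
    ((hquad6 a b p).sub (hquad6 c d p)).const_mul k).fderiv]
  simp only [pr6, ContinuousLinearMap.coe_smul', ContinuousLinearMap.add_apply,
    ContinuousLinearMap.sub_apply, ContinuousLinearMap.smul_apply, Pi.smul_apply,
    smul_eq_mul, ContinuousLinearMap.proj_apply]
  ring

lemma key6 (f : (Fin 6 → ℝ) → Fin 6 → ℝ) (p : Fin 6 → ℝ)
    (hf : ∀ i, DifferentiableAt ℝ (fun q => f q i) p) (v : Fin 6 → ℝ) (i : Fin 6) :
    fderiv ℝ f p v i = fderiv ℝ (fun q => f q i) p v := by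
  rw [show f = fun q i => f q i from rfl, fderiv_pi hf]; rfl

lemma cv0 (a b c d e f : ℝ) : (![a,b,c,d,e,f] : Fin 6 → ℝ) 0 = a := rfl
lemma cv1 (a b c d e f : ℝ) : (![a,b,c,d,e,f] : Fin 6 → ℝ) 1 = b := rfl
lemma cv2 (a b c d e f : ℝ) : (![a,b,c,d,e,f] : Fin 6 → ℝ) 2 = c := rfl
lemma cv3 (a b c d e f : ℝ) : (![a,b,c,d,e,f] : Fin 6 → ℝ) 3 = d := rfl
lemma cv4 (a b c d e f : ℝ) : (![a,b,c,d,e,f] : Fin 6 → ℝ) 4 = e := rfl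
lemma cv5 (a b c d e f : ℝ) : (![a,b,c,d,e,f] : Fin 6 → ℝ) 5 = f := rfl

/-- The symmetry vector fields X₁, X₂ commute with each other and with the
vector field F of the so(3,1) top-like system.  Coordinates on ℝ⁶:
(w₁,u₁,v₁,w₂,u₂,v₂) = (p 0, p 1, p 2, p 3, p 4, p 5). -/
theorem stmt_12 (αm1 α0 α1 : ℝ)
    (X1 X2 F : (Fin 6 → ℝ) → (Fin 6 → ℝ))
    (hX1 : X1 = fun p => ![0, -p 1, p 2, 0, -p 4, p 5])
    (hX2 : X2 = fun p => ![0, p 4, p 5, 0, -p 1, -p 2])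
    (hF : F = fun p =>
      ![(α1 - αm1) * (p 4 * p 2 - p 1 * p 5),
        (α0 - α1) * (p 4 * p 0 - p 1 * p 3),
        (α0 - αm1) * (p 5 * p 0 + p 2 * p 3),
        (α1 - αm1) * (p 1 * p 2 + p 4 * p 5),
        (α1 - α0) * (p 1 * p 0 + p 4 * p 3),
        (αm1 - α0) * (p 2 * p 0 - p 5 * p 3)]) :
    (∀ p, fderiv ℝ X2 p (X1 p) - fderiv ℝ X1 p (X2 p) = 0) ∧
    (∀ p, fderiv ℝ F p (X1 p) - fderiv ℝ X1 p (F p) = 0) ∧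
    (∀ p, fderiv ℝ F p (X2 p) - fderiv ℝ X2 p (F p) = 0) := by
  subst hX1 hX2 hF
  have dX1 : ∀ (p : Fin 6 → ℝ) (i : Fin 6), DifferentiableAt ℝ
      (fun q : Fin 6 → ℝ => (![0, -q 1, q 2, 0, -q 4, q 5] : Fin 6 → ℝ) i) p := by
    intro p i
    fin_cases i <;> simp [cv0, cv1, cv2, cv3, cv4, cv5] <;>
      first
        | exact differentiableAt_const _
        | exact (hpr6 _ _).differentiableAt
        | exact ((hpr6 _ _).neg).differentiableAt
  have dX2 : ∀ (p : Fin 6 → ℝ) (i : Fin 6), DifferentiableAt ℝ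
      (fun q : Fin 6 → ℝ => (![0, q 4, q 5, 0, -q 1, -q 2] : Fin 6 → ℝ) i) p := by
    intro p i
    fin_cases i <;> simp [cv0, cv1, cv2, cv3, cv4, cv5] <;>
      first
        | exact differentiableAt_const _
        | exact (hpr6 _ _).differentiableAt
        | exact ((hpr6 _ _).neg).differentiableAt
  have dF : ∀ (p : Fin 6 → ℝ) (i : Fin 6), DifferentiableAt ℝ
      (fun q : Fin 6 → ℝ => (![(α1 - αm1) * (q 4 * q 2 - q 1 * q 5),
        (α0 - α1) * (q 4 * q 0 - q 1 * q 3),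
        (α0 - αm1) * (q 5 * q 0 + q 2 * q 3),
        (α1 - αm1) * (q 1 * q 2 + q 4 * q 5),
        (α1 - α0) * (q 1 * q 0 + q 4 * q 3),
        (αm1 - α0) * (q 2 * q 0 - q 5 * q 3)] : Fin 6 → ℝ) i) p := by
    intro p i
    fin_cases i <;> simp only [cv0, cv1, cv2, cv3, cv4, cv5] <;>
      first
        | exact ((((hquad6 _ _ _).add (hquad6 _ _ _)).const_mul _)).differentiableAt
        | exact ((((hquad6 _ _ _).sub (hquad6 _ _ _)).const_mul _)).differentiableAt
  refine ⟨?_, ?_, ?_⟩ <;> intro p <;> funext i <;>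
    simp only [Pi.sub_apply, Pi.zero_apply] <;>
    rw [key6 _ p (by first | exact dX1 p | exact dX2 p | exact dF p),
        key6 _ p (by first | exact dX1 p | exact dX2 p | exact dF p)] <;>
    fin_cases i <;>
    simp [cv0, cv1, cv2, cv3, cv4, cv5, fd_coord6, fd_neg6, fdA6, fdB6] <;>
    try ring
  all_goals tauto
end

section
/- If the six functions w₁,u₁,v₁,w₂,u₂,v₂ satisfy the system w₁' = ((α₁-α₋₁)/(1-kl))(-l u₁v₁ + u₂v₁ - u₁v₂ - l u₂v₂), u₁' = (α₁-α₀)(k u₁ - u₂)w₁ + (α₁-α₋₁)(u₁ - l u₂)w₂, v₁' = (α₀-α₋₁)(k v₁ + v₂)w₁, w₂' = ((α₁-α₋₁)/(1-kl))(u₁v₁ - k u₂v₁ + k u₁v₂ + u₂v₂), u₂' = (α₁-α₀)(u₁ + k u₂)w₁ + (α₁-α₋₁)(l u₁ + u₂)w₂, v₂' = (α₋₁-α₀)(v₁ - k v₂)w₁, then I₁ = -2u₁v₁ - 2u₂v₂ + (k w₁ + w₂)² - (w₁ + l w₂)² is constant along solutions. -/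
/-- First integral I₁ of the non-graded so(3,1) top-like system. -/
theorem stmt_15 (αm1 α0 α1 k l : ℝ) (hkl : k * l ≠ 1)
    (w1 u1 v1 w2 u2 v2 : ℝ → ℝ)
    (hw1 : ∀ t, HasDerivAt w1 ((α1 - αm1) / (1 - k * l) *
      (-(l * (u1 t * v1 t)) + u2 t * v1 t - u1 t * v2 t - l * (u2 t * v2 t))) t)
    (hu1 : ∀ t, HasDerivAt u1 ((α1 - α0) * (k * u1 t - u2 t) * w1 t +
      (α1 - αm1) * (u1 t - l * u2 t) * w2 t) t)
    (hv1 : ∀ t, HasDerivAt v1 ((α0 - αm1) * (k * v1 t + v2 t) * w1 t) t)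
    (hw2 : ∀ t, HasDerivAt w2 ((α1 - αm1) / (1 - k * l) *
      (u1 t * v1 t - k * (u2 t * v1 t) + k * (u1 t * v2 t) + u2 t * v2 t)) t)
    (hu2 : ∀ t, HasDerivAt u2 ((α1 - α0) * (u1 t + k * u2 t) * w1 t +
      (α1 - αm1) * (l * u1 t + u2 t) * w2 t) t)
    (hv2 : ∀ t, HasDerivAt v2 ((αm1 - α0) * (v1 t - k * v2 t) * w1 t) t) :
    ∀ t, HasDerivAt (fun t => -(2 * (u1 t * v1 t)) - 2 * (u2 t * v2 t) +
      (k * w1 t + w2 t) ^ 2 - (w1 t + l * w2 t) ^ 2) 0 t := by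
  intro t
  have h1kl : (1 : ℝ) - k * l ≠ 0 := by
    intro h; apply hkl; linarith
  have h := (((((hu1 t).mul (hv1 t)).const_mul 2).neg.sub
      (((hu2 t).mul (hv2 t)).const_mul 2)).add
      ((((hw1 t).const_mul k).add (hw2 t)).pow 2)).sub
      (((hw1 t).add ((hw2 t).const_mul l)).pow 2)
  refine h.congr_deriv ?_
  simp only [Pi.add_apply]
  field_simp
  ring
end

section
/- Under the same non-graded so(3,1) top-like system (with parameters k, l, kl ≠ 1), the quantity I₂ = u₂v₁ - u₁v₂ - (k w₁ + w₂)(w₁ + l w₂) is constant along solutions. -/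
/-- First integral I₂ of the non-graded so(3,1) top-like system. -/
theorem stmt_16 (αm1 α0 α1 k l : ℝ) (hkl : k * l ≠ 1)
    (w1 u1 v1 w2 u2 v2 : ℝ → ℝ)
    (hw1 : ∀ t, HasDerivAt w1 ((α1 - αm1) / (1 - k * l) *
      (-(l * (u1 t * v1 t)) + u2 t * v1 t - u1 t * v2 t - l * (u2 t * v2 t))) t)
    (hu1 : ∀ t, HasDerivAt u1 ((α1 - α0) * (k * u1 t - u2 t) * w1 t +
      (α1 - αm1) * (u1 t - l * u2 t) * w2 t) t)
    (hv1 : ∀ t, HasDerivAt v1 ((α0 - αm1) * (k * v1 t + v2 t) * w1 t) t)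
    (hw2 : ∀ t, HasDerivAt w2 ((α1 - αm1) / (1 - k * l) *
      (u1 t * v1 t - k * (u2 t * v1 t) + k * (u1 t * v2 t) + u2 t * v2 t)) t)
    (hu2 : ∀ t, HasDerivAt u2 ((α1 - α0) * (u1 t + k * u2 t) * w1 t +
      (α1 - αm1) * (l * u1 t + u2 t) * w2 t) t)
    (hv2 : ∀ t, HasDerivAt v2 ((αm1 - α0) * (v1 t - k * v2 t) * w1 t) t) :
    ∀ t, HasDerivAt (fun t => u2 t * v1 t - u1 t * v2 t -
      (k * w1 t + w2 t) * (w1 t + l * w2 t)) 0 t := by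
  intro t
  have h := (((hu2 t).mul (hv1 t)).sub ((hu1 t).mul (hv2 t))).sub
    ((((hw1 t).const_mul k).add (hw2 t)).mul ((hw1 t).add ((hw2 t).const_mul l)))
  refine h.congr_deriv ?_
  have h1 : (1 : ℝ) - k * l ≠ 0 := by
    intro h0; apply hkl; linarith
  simp only [Pi.add_apply]
  field_simp
  ring
end
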